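/- arXiv:math/0411445 — 3 statements merged into one kernel-verified Lean document; each statement's English description precedes it below -/
import Mathlib

section
/- Let X be a reduced set of points in P^2 whose homogeneous ideal I_X has Castelnuovo–Mumford regularity r+1 (equivalently, X imposes independent conditions on forms of degree r). Let Z be the first infinitesimal neighborhood of X (the scheme defined by the intersection of the squares of the ideals of the points of X). Then reg(I_Z) ≤ 2·reg(I_X) = 2r+2; i.e., Z imposes independent conditions on forms of degree 2r+1. -/
open MvPolynomial

noncomputable section

variable {k : Type} [Field k]

/-- The polynomial ring `k[x₀,x₁,x₂]`. -/
abbrev R3 (k : Type) [Field k] := MvPolynomial (Fin 3) k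

/-- The ideal of polynomials vanishing on a set of affine representatives in `k³`. -/
def vIdeal (S : Set (Fin 3 → k)) : Ideal (R3 k) where
  carrier := {f | ∀ x ∈ S, eval x f = 0}
  add_mem' := by intro a b ha hb x hx; simp [map_add, ha x hx, hb x hx]
  zero_mem' := by intro x _; simp
  smul_mem' := by intro c f hf x hx; simp [smul_eq_mul, map_mul, hf x hx]

/-- The (prime) ideal of the point of `ℙ²` with representative `p`. -/
def pointIdeal (p : Fin 3 → k) : Ideal (R3 k) := vIdeal {x | ∃ c : k, x = c • p}

/-- The radical (saturated) ideal of a finite set of points. -/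
def radIdeal (X : Finset (Fin 3 → k)) : Ideal (R3 k) := ⨅ p ∈ X, pointIdeal p

/-- The saturated ideal of the first infinitesimal neighborhood (double point scheme). -/
def dblIdeal (X : Finset (Fin 3 → k)) : Ideal (R3 k) := ⨅ p ∈ X, (pointIdeal p) ^ 2

/-- Hilbert function of `R/I` in degree `t`. -/
def hilb (I : Ideal (R3 k)) (t : ℕ) : ℕ :=
  Module.finrank k (homogeneousSubmodule (Fin 3) k t) -
    Module.finrank k ↥(Submodule.restrictScalars k I ⊓ homogeneousSubmodule (Fin 3) k t)

/-- Regularity of a zero-dimensional scheme: least `t > 0` with `Δ h_{R/I}(t) = 0`. -/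
def regC (I : Ideal (R3 k)) : ℕ := sInf {t | 0 < t ∧ hilb I t = hilb I (t - 1)}

/-- Two representatives give the same projective point. -/
def SameProj (p q : Fin 3 → k) : Prop := ∃ c : k, c ≠ 0 ∧ q = c • p

/-- A finite set of representatives of distinct points of `ℙ²`. -/
def GoodPoints (X : Finset (Fin 3 → k)) : Prop :=
  (∀ p ∈ X, p ≠ 0) ∧ ∀ p ∈ X, ∀ q ∈ X, p ≠ q → ¬ SameProj p q

/-- The point `q` lies on the line with normal vector `ℓ`. -/
def onLine (ℓ q : Fin 3 → k) : Prop := (∑ i, ℓ i * q i) = 0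

/-- `t` distinct lines, no three concurrent: each line meets the others in distinct points. -/
def GenLines (t : ℕ) (ℓ : Fin t → (Fin 3 → k)) : Prop :=
  (∀ i, ℓ i ≠ 0) ∧ (∀ i j, i ≠ j → ¬ SameProj (ℓ i) (ℓ j)) ∧
    ∀ i j l, i ≠ j → j ≠ l → i ≠ l →
      ∀ p : Fin 3 → k, p ≠ 0 → ¬ (onLine (ℓ i) p ∧ onLine (ℓ j) p ∧ onLine (ℓ l) p)

/-- `X` is (a set of representatives of) the `t.choose 2` pairwise intersection
points of the lines `ℓ`. -/
def IsIntersectionConfig (t : ℕ) (ℓ : Fin t → (Fin 3 → k)) (X : Finset (Fin 3 → k)) : Prop :=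
  GoodPoints X ∧ X.card = t.choose 2 ∧
    (∀ p ∈ X, ∃ i j, i ≠ j ∧ onLine (ℓ i) p ∧ onLine (ℓ j) p) ∧
    (∀ i j, i ≠ j → ∃ p ∈ X, onLine (ℓ i) p ∧ onLine (ℓ j) p)

/-- The linear form with coefficient vector `a`. -/
def linForm (a : Fin 3 → k) : R3 k := ∑ i, C (a i) * X i

/-- `F` is (up to scalar) a product of `d` lines, each meeting the remaining
lines in `d-1` distinct points. -/
def IsGeneralLineUnion (d : ℕ) (F : R3 k) : Prop :=
  ∃ (c : k) (ℓ : Fin d → (Fin 3 → k)), c ≠ 0 ∧ GenLines d ℓ ∧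
    F = C c * ∏ i, linForm (ℓ i)

/-- `p` is a singular point of the curve `F`. -/
def IsSing (F : R3 k) (p : Fin 3 → k) : Prop :=
  p ≠ 0 ∧ ∀ i, eval p (pderiv i F) = 0

/-- `p` is an ordinary double point (node) of `F`: singular, and the Hessian has rank 2. -/
def IsNode (F : R3 k) (p : Fin 3 → k) : Prop :=
  IsSing F p ∧ (Matrix.of fun i j => eval p (pderiv i (pderiv j F))).rank = 2

/-- `f` is homogeneous of degree `d`. -/
def IsHomog (f : R3 k) (d : ℕ) : Prop := f ∈ homogeneousSubmodule (Fin 3) k d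

/-- `I` is a homogeneous ideal. -/
def HomogIdeal (I : Ideal (R3 k)) : Prop :=
  ∀ f ∈ I, ∀ d, homogeneousComponent d f ∈ I

/-- `I` is saturated with respect to the irrelevant maximal ideal. -/
def IsSat (I : Ideal (R3 k)) : Prop :=
  ∀ f : R3 k, (∀ i : Fin 3, X i * f ∈ I) → f ∈ I

/-- `{F, G}` is a regular sequence on `R`. -/
def RegPair (F G : R3 k) : Prop :=
  F ≠ 0 ∧ ∀ a : R3 k, G * a ∈ Ideal.span {F} → a ∈ Ideal.span {F}

/-- `J` is obtained from `I` by a basic double link `J = G·I + (F)`. -/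
def BDLStep (I J : Ideal (R3 k)) : Prop :=
  ∃ (F G : R3 k) (d1 d2 : ℕ), F ∈ I ∧ IsHomog F d1 ∧ IsHomog G d2 ∧ RegPair F G ∧
    J = Ideal.span {G} * I ⊔ Ideal.span {F}

/-- The irrelevant maximal ideal `(x₀,x₁,x₂)`. -/
def mIdeal : Ideal (R3 k) := Ideal.span {X 0, X 1, X 2}

/-- `(g, M)` is a graded free resolution `0 → ⊕ R(-d2 j) → ⊕ R(-d1 i) → I → 0`:
the `g i` are homogeneous of degree `d1 i` and generate `I`, the syzygies among the
`g i` are exactly the `R`-combinations of the columns of the homogeneous matrix `M`,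
and the columns of `M` are independent. -/
def GFRes (I : Ideal (R3 k)) {a b : ℕ} (d1 : Fin a → ℕ) (d2 : Fin b → ℕ)
    (g : Fin a → R3 k) (M : Fin a → Fin b → R3 k) : Prop :=
  (∀ i, IsHomog (g i) (d1 i)) ∧
  Ideal.span (Set.range g) = I ∧
  (∀ i j, M i j ≠ 0 → d1 i ≤ d2 j) ∧
  (∀ i j, IsHomog (M i j) (d2 j - d1 i)) ∧
  (∀ v : Fin a → R3 k, (∑ i, v i * g i = 0) ↔ ∃ c : Fin b → R3 k, ∀ i, v i = ∑ j, c j * M i j) ∧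
  (∀ c : Fin b → R3 k, (∀ i, ∑ j, c j * M i j = 0) → c = 0)

/-- The resolution with syzygy matrix `M` is minimal. -/
def MinRes {a b : ℕ} (M : Fin a → Fin b → R3 k) : Prop :=
  ∀ i j, constantCoeff (M i j) = 0

/-- A pseudo type vector `(m 0, …, m (p-1))`. -/
def IsPseudoType (p : ℕ) (m : ℕ → ℕ) : Prop :=
  (∀ i, i < p → 0 < m i) ∧ (∀ i, i + 1 < p → m i ≤ m (i + 1)) ∧
  (∀ i, i + 2 < p → m i = m (i + 1) → m (i + 1) < m (i + 2))

/-- Condition (*): between any two zero entries of `ΔT'` there is an entry `> 1`. -/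
def CondStar (p : ℕ) (m : ℕ → ℕ) : Prop :=
  ∀ i j, i + 1 < p → j + 1 < p → i < j → m i = m (i + 1) → m j = m (j + 1) →
    ∃ l, i + 2 ≤ l ∧ l ≤ j ∧ m (l - 1) + 2 ≤ m l

/-- The `i`-th summand (shifted by `p-1-i`) of the standard O-sequence of a pseudo
type vector, evaluated at `t`. -/
def sTerm (p : ℕ) (m : ℕ → ℕ) (i t : ℕ) : ℕ :=
  let prev : ℕ := if i = 0 then 0 else m (i - 1)
  let next : ℕ := if i + 1 < p then m (i + 1) else m i + 1
  let shift : ℕ := p - 1 - i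
  if m i = next then 0
  else if prev = m i then
    (if t = shift then 1 else if shift < t ∧ t < shift + m i then 2
     else if t = shift + m i then 1 else 0)
  else (if shift ≤ t ∧ t < shift + m i then 1 else 0)

/-- The standard O-sequence associated to a pseudo type vector. -/
def sOS (p : ℕ) (m : ℕ → ℕ) (t : ℕ) : ℕ := ∑ i ∈ Finset.range p, sTerm p m i t

/-- The standard Hilbert function associated to a pseudo type vector. -/
def SHF (p : ℕ) (m : ℕ → ℕ) (t : ℕ) : ℕ := ∑ j ∈ Finset.range (t + 1), sOS p m j

/-- A pseudo linear configuration of type `(m 0, …, m (p-1))` on the lines `ℓ`. -/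
def PseudoConfig (p : ℕ) (m : ℕ → ℕ) (ℓ : ℕ → (Fin 3 → k))
    (Xc : ℕ → Finset (Fin 3 → k)) : Prop :=
  (∀ i, i < p → ℓ i ≠ 0) ∧
  (∀ i j, i < p → j < p → i ≠ j → ¬ SameProj (ℓ i) (ℓ j)) ∧
  (∀ i, i < p → (Xc i).card = m i ∧ GoodPoints (Xc i)) ∧
  (∀ i, i < p → ∀ q ∈ Xc i, onLine (ℓ i) q) ∧
  (∀ i j, i < p → j < p → j ≠ i → ∀ q ∈ Xc i, ¬ onLine (ℓ j) q)

/-- The ideal of a pseudo linear configuration. -/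
def pcRad (p : ℕ) (Xc : ℕ → Finset (Fin 3 → k)) : Ideal (R3 k) :=
  ⨅ i ∈ Finset.range p, radIdeal (Xc i)

/-- A k-configuration of type `(n 0, …, n (r-1))` in `ℙ²`. -/
def KConfig (r : ℕ) (n : Fin r → ℕ) (ℓ : Fin r → (Fin 3 → k))
    (Xc : Fin r → Finset (Fin 3 → k)) : Prop :=
  (∀ i, ℓ i ≠ 0) ∧ (∀ i j, i ≠ j → ¬ SameProj (ℓ i) (ℓ j)) ∧
  (∀ i, (Xc i).card = n i ∧ GoodPoints (Xc i)) ∧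
  (∀ i, ∀ q ∈ Xc i, onLine (ℓ i) q) ∧
  (∀ i j : Fin r, j < i → ∀ q ∈ Xc j, ¬ onLine (ℓ i) q)

/-- A linear configuration of type `(n 0, …, n (r-1))` in `ℙ²`. -/
def LinearConfig (r : ℕ) (n : Fin r → ℕ) (ℓ : Fin r → (Fin 3 → k))
    (Xc : Fin r → Finset (Fin 3 → k)) : Prop :=
  (∀ i, ℓ i ≠ 0) ∧ (∀ i j, i ≠ j → ¬ SameProj (ℓ i) (ℓ j)) ∧
  (∀ i, (Xc i).card = n i ∧ GoodPoints (Xc i)) ∧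
  (∀ i, ∀ q ∈ Xc i, onLine (ℓ i) q) ∧
  (∀ i j, j ≠ i → ∀ q ∈ Xc i, ¬ onLine (ℓ j) q)

/-- The ideal of (the union of the points of) a configuration given by groups. -/
def lcRad {r : ℕ} (Xc : Fin r → Finset (Fin 3 → k)) : Ideal (R3 k) :=
  ⨅ i, radIdeal (Xc i)

/-- The ideal of the double points supported on a configuration given by groups. -/
def lcDbl {r : ℕ} (Xc : Fin r → Finset (Fin 3 → k)) : Ideal (R3 k) :=
  ⨅ i, dblIdeal (Xc i)

/-- Hilbert function of `d` points on a line (with value `0` in negative degrees). -/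
def hl (d : ℕ) (j : ℤ) : ℕ := if j < 0 then 0 else min (j.toNat + 1) d

/-- The Hilbert function associated to a 2-type vector `(n 0 < … < n (r-1))`:
`h(j) = h_r(j) + h_{r-1}(j-1) + ⋯ + h_1(j-(r-1))`. -/
def hT (r : ℕ) (n : Fin r → ℕ) (j : ℕ) : ℕ :=
  ∑ i : Fin r, hl (n i) ((j : ℤ) - ((r - 1 - (i : ℕ) : ℕ) : ℤ))

/-- The associated pseudo type vector of a 2-type vector, as a sorted list:
`(n₁, 2n₁, …, n_r, 2n_r)` in nondecreasing order. -/
def assocList (r : ℕ) (n : Fin r → ℕ) : List ℕ :=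
  List.insertionSort (· ≤ ·) (List.ofFn n ++ List.ofFn fun i => 2 * n i)

/-- The associated pseudo type vector as a function. -/
def assocPTV (r : ℕ) (n : Fin r → ℕ) : ℕ → ℕ := fun j => (assocList r n).getD j 0

/-!
Let `V_t ⊆ k^X` be the space of values on `X` of forms of degree `t`, so that
`h_{R/I_X}(t) = dim V_t`, and let `ℓ` be a linear form vanishing at no point of `X`.
Multiplication by the values of `ℓ` embeds `V_t` into `V_{t+1}`, while `V_{t+1} = ∑ x_i V_t`
(Euler's formula). Hence `dim V_{r+1} = dim V_r` forces `V_{t+1} = ℓ V_t` for all `t ≥ r`, and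
since `V_t = k^X` for `t` large, already `V_r = k^X`: every point of `X` has a separating form
of degree `r`, and then also of degree `r + 1`.

In characteristic 0 a form `f` of positive degree lies in `p_q²` iff `∇f(q) = 0`, so
`h_{R/I_Z}(t)` is the rank of the gradient map `f ↦ (∇f(q))_{q ∈ X}`. Multiplying the product of
two separators of `q` by a suitable linear form prescribes the gradient at `q` and leaves it zero
at the other points, so the gradient map is onto in degrees `2r + 1` and `2r + 2`, where
`h_{R/I_Z}` therefore takes the same value `3 |X|`.
-/

namespace MvPolynomial

variable {σ R : Type*}

theorem IsHomogeneous.eval_smul [CommSemiring R] {f : MvPolynomial σ R} {n : ℕ}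
    (hf : f.IsHomogeneous n) (c : R) (x : σ → R) : eval (c • x) f = c ^ n * eval x f := by
  rw [f.as_sum, map_sum, map_sum, Finset.mul_sum]
  refine Finset.sum_congr rfl fun d hd => ?_
  have hdeg : ∑ i ∈ d.support, d i = n := by
    rw [← Finsupp.degree_apply, Finsupp.degree_eq_weight_one]
    exact hf (mem_support_iff.mp hd)
  simp only [eval_monomial, Finsupp.prod, Pi.smul_apply, smul_eq_mul, mul_pow,
    Finset.prod_mul_distrib, Finset.prod_pow_eq_pow_sum, hdeg]
  ring

theorem IsHomogeneous.sum_mul_eval_pderiv [CommSemiring R] [Fintype σ] {f : MvPolynomial σ R}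
    {n : ℕ} (hf : f.IsHomogeneous n) (x : σ → R) :
    ∑ i, x i * eval x (pderiv i f) = n * eval x f := by
  simpa [nsmul_eq_mul] using congr(eval x $(hf.sum_X_mul_pderiv))

theorem pderiv_comm [CommRing R] (i j : σ) (f : MvPolynomial σ R) :
    pderiv i (pderiv j f) = pderiv j (pderiv i f) := by
  classical
  have h : ⁅pderiv i, pderiv j⁆ = (0 : Derivation R (MvPolynomial σ R) (MvPolynomial σ R)) :=
    derivation_ext fun a => by
      rw [Derivation.commutator_apply]
      simp [pderiv_X, Pi.single_apply, apply_ite]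
  have hf := congr($h f)
  rwa [Derivation.commutator_apply, Derivation.zero_apply, sub_eq_zero] at hf

end MvPolynomial

local notation "H" => homogeneousSubmodule (Fin 3) k

theorem eval_linForm (a x : Fin 3 → k) : eval x (linForm a) = ∑ i, a i * x i := by
  simp [linForm]

theorem isHomogeneous_linForm (a : Fin 3 → k) : (linForm a).IsHomogeneous 1 :=
  IsHomogeneous.sum _ _ _ fun _ _ => isHomogeneous_C_mul_X _ _

theorem pderiv_linForm (a : Fin 3 → k) (i : Fin 3) : pderiv i (linForm a) = C (a i) := by
  classical
  simp [linForm, pderiv_X, Pi.single_apply]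

theorem exists_linForm_eval_eq (φ : Module.Dual k (Fin 3 → k)) :
    ∃ a, ∀ x, eval x (linForm a) = φ x := by
  classical
  refine ⟨fun i => φ fun j => if i = j then 1 else 0, fun x => ?_⟩
  simp [eval_linForm, LinearMap.pi_apply_eq_sum_univ φ x, mul_comm]

theorem eval_eq_zero_of_mem_pointIdeal {q : Fin 3 → k} {f : R3 k} (hf : f ∈ pointIdeal q) :
    eval q f = 0 :=
  hf q ⟨1, (one_smul k q).symm⟩

theorem mem_pointIdeal_iff_eval_eq_zero {f : R3 k} {n : ℕ} (hf : f.IsHomogeneous n)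
    (q : Fin 3 → k) : f ∈ pointIdeal q ↔ eval q f = 0 := by
  refine ⟨eval_eq_zero_of_mem_pointIdeal, fun h x ⟨c, hx⟩ => ?_⟩
  rw [hx, hf.eval_smul, h, mul_zero]

theorem eval_pderiv_eq_zero_of_mem_pointIdeal_sq {q : Fin 3 → k} {f : R3 k}
    (hf : f ∈ pointIdeal q ^ 2) (i : Fin 3) : eval q (pderiv i f) = 0 := by
  rw [pow_two] at hf
  refine Submodule.mul_induction_on hf (fun a ha b hb => ?_) fun a b ha hb => by simp [ha, hb]
  simp [eval_eq_zero_of_mem_pointIdeal ha, eval_eq_zero_of_mem_pointIdeal hb]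

theorem exists_linear_eval_eq_one {q : Fin 3 → k} (hq : q ≠ 0) :
    ∃ ℓ : R3 k, ℓ.IsHomogeneous 1 ∧ eval q ℓ = 1 := by
  obtain ⟨j, hj⟩ := Function.ne_iff.mp hq
  exact ⟨C (q j)⁻¹ * X j, isHomogeneous_C_mul_X _ _, by simp [inv_mul_cancel₀ hj]⟩

/-- Induction on the degree: Euler's formula writes `n f` as `∑ (X_a - q_a ℓ) ∂_a f + ℓ g`,
where `ℓ q = 1` and `g = ∑ q_a ∂_a f` again satisfies the hypotheses, in degree `n - 1`. -/
theorem mem_pointIdeal_sq_of_eval_pderiv_eq_zero [CharZero k] {q : Fin 3 → k} (hq : q ≠ 0)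
    {n : ℕ} {f : R3 k} (hf : f.IsHomogeneous n) (h0 : eval q f = 0)
    (hd : ∀ i, eval q (pderiv i f) = 0) : f ∈ pointIdeal q ^ 2 := by
  induction n generalizing f with
  | zero =>
    rw [← totalDegree_zero_iff_isHomogeneous, totalDegree_eq_zero_iff_eq_C] at hf
    rw [hf, eval_C] at h0
    rw [hf, h0, C_0]
    exact zero_mem _
  | succ n ih =>
    obtain ⟨ℓ, hℓ, hℓq⟩ := exists_linear_eval_eq_one hq
    set g := ∑ a, C (q a) * pderiv a f
    have hg : g.IsHomogeneous n :=
      IsHomogeneous.sum _ _ _ fun a _ => by simpa using (hf.pderiv (i := a)).C_mul (q a)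
    have hgq : eval q g = 0 := by simp [g, hd]
    have hdg : ∀ b, eval q (pderiv b g) = 0 := fun b => by
      have heuler := (hf.pderiv (i := b)).sum_mul_eval_pderiv q
      simp only [Nat.add_sub_cancel, hd b, mul_zero] at heuler
      simpa [g, pderiv_C_mul, pderiv_comm b] using heuler
    have hL : ∀ a, X a - C (q a) * ℓ ∈ pointIdeal q := fun a =>
      (mem_pointIdeal_iff_eval_eq_zero ((isHomogeneous_X k a).sub (hℓ.C_mul (q a))) q).mpr
        (by simp [hℓq])
    have hsplit : ((n + 1 : ℕ) : R3 k) * f = ∑ a, (X a - C (q a) * ℓ) * pderiv a f + ℓ * g := by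
      rw [← nsmul_eq_mul, ← hf.sum_X_mul_pderiv]
      simp [g, sub_mul, Finset.sum_sub_distrib, Finset.mul_sum, mul_assoc, mul_left_comm]
    have hunit : IsUnit ((n + 1 : ℕ) : R3 k) := by
      rw [← map_natCast C]
      exact (Nat.cast_ne_zero.mpr n.succ_ne_zero).isUnit.map C
    rw [← Ideal.unit_mul_mem_iff_mem _ hunit, hsplit, pow_two]
    refine add_mem (Ideal.sum_mem _ fun a _ => Ideal.mul_mem_mul (hL a) ?_) ?_
    · exact (mem_pointIdeal_iff_eval_eq_zero hf.pderiv q).mpr (hd a)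
    · rw [← pow_two]
      exact Ideal.mul_mem_left _ _ (ih hg hgq hdg)

theorem mem_radIdeal_iff {X : Finset (Fin 3 → k)} {n : ℕ} {f : R3 k} (hf : f.IsHomogeneous n) :
    f ∈ radIdeal X ↔ ∀ q ∈ X, eval q f = 0 := by
  simp only [radIdeal, Ideal.mem_iInf, mem_pointIdeal_iff_eval_eq_zero hf]

theorem mem_dblIdeal_iff [CharZero k] {X : Finset (Fin 3 → k)} (hX : ∀ q ∈ X, q ≠ 0) {n : ℕ}
    (hn : n ≠ 0) {f : R3 k} (hf : f.IsHomogeneous n) :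
    f ∈ dblIdeal X ↔ ∀ q ∈ X, ∀ i, eval q (pderiv i f) = 0 := by
  simp only [dblIdeal, Ideal.mem_iInf]
  refine forall₂_congr fun q hq => ⟨eval_pderiv_eq_zero_of_mem_pointIdeal_sq, fun hd => ?_⟩
  refine mem_pointIdeal_sq_of_eval_pderiv_eq_zero (hX q hq) hf ?_ hd
  simpa [hd, hn] using (hf.sum_mul_eval_pderiv q).symm

section HilbertFunction

variable (X : Finset (Fin 3 → k))

def evalMap (t : ℕ) : H t →ₗ[k] (X → k) where
  toFun f q := eval q.1 f
  map_add' _ _ := by ext; simp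
  map_smul' _ _ := by ext; simp [smul_eval]

def gradMap (t : ℕ) : H t →ₗ[k] (X → Fin 3 → k) where
  toFun f q i := eval q.1 (pderiv i f)
  map_add' _ _ := by ext; simp
  map_smul' _ _ := by ext; simp [smul_eval]

@[simp]
theorem evalMap_apply {t : ℕ} (f : H t) (q : X) : evalMap X t f q = eval q.1 f := rfl

@[simp]
theorem gradMap_apply {t : ℕ} (f : H t) (q : X) (i : Fin 3) :
    gradMap X t f q i = eval q.1 (pderiv i f) := rfl

variable {X}

theorem hilb_eq_finrank_range {V : Type*} [AddCommGroup V] [Module k V] (I : Ideal (R3 k))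
    {t : ℕ} (φ : H t →ₗ[k] V) (hφ : ∀ f, φ f = 0 ↔ f.1 ∈ I) :
    hilb I t = Module.finrank k (LinearMap.range φ) := by
  have : Module.Finite k (H t) := Module.Finite.iff_fg.mpr (homogeneousSubmodule_fg _ _ t)
  have hker : (Submodule.restrictScalars k I ⊓ H t) = (LinearMap.ker φ).map (H t).subtype := by
    ext f
    constructor
    · rintro ⟨hI, ht⟩
      exact ⟨⟨f, ht⟩, (hφ _).mpr hI, rfl⟩
    · rintro ⟨g, hg, rfl⟩
      exact ⟨(hφ g).mp hg, g.2⟩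
  rw [hilb, hker, Submodule.finrank_map_subtype_eq, ← LinearMap.finrank_range_add_finrank_ker φ,
    Nat.add_sub_cancel]

theorem hilb_radIdeal (t : ℕ) :
    hilb (radIdeal X) t = Module.finrank k (LinearMap.range (evalMap X t)) :=
  hilb_eq_finrank_range _ _ fun f => by
    rw [mem_radIdeal_iff f.2, funext_iff]
    simp

theorem hilb_dblIdeal [CharZero k] (hX : ∀ q ∈ X, q ≠ 0) {t : ℕ} (ht : t ≠ 0) :
    hilb (dblIdeal X) t = Module.finrank k (LinearMap.range (gradMap X t)) :=
  hilb_eq_finrank_range _ _ fun f => by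
    rw [mem_dblIdeal_iff hX ht f.2, funext_iff]
    simp [funext_iff]

end HilbertFunction

theorem hilb_succ_eq_of_regC_eq {I : Ideal (R3 k)} {r : ℕ} (h : regC I = r + 1) :
    hilb I (r + 1) = hilb I r := by
  have hne : {t | 0 < t ∧ hilb I t = hilb I (t - 1)}.Nonempty := by
    rw [Set.nonempty_iff_ne_empty]
    intro hS
    rw [regC, hS, Nat.sInf_empty] at h
    omega
  have hmem := (Nat.sInf_mem hne).2
  rwa [← regC, h] at hmem

theorem regC_le_of_hilb_eq {I : Ideal (R3 k)} {t : ℕ} (ht : 0 < t)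
    (h : hilb I t = hilb I (t - 1)) : regC I ≤ t :=
  Nat.sInf_le ⟨ht, h⟩

section EvalRange

variable {X : Finset (Fin 3 → k)}

theorem map_mulLeft_range_evalMap_le {g : R3 k} {m : ℕ} (hg : g.IsHomogeneous m) (t : ℕ) :
    (LinearMap.range (evalMap X t)).map (LinearMap.mulLeft k fun q : X => eval q.1 g) ≤
      LinearMap.range (evalMap X (t + m)) := by
  rintro _ ⟨_, ⟨f, rfl⟩, rfl⟩
  exact ⟨⟨f * g, IsHomogeneous.mul f.2 hg⟩, by ext q; simp [mul_comm]⟩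

theorem range_evalMap_succ [CharZero k] (t : ℕ) :
    LinearMap.range (evalMap X (t + 1)) =
      ⨆ i, (LinearMap.range (evalMap X t)).map (LinearMap.mulLeft k fun q : X => q.1 i) := by
  refine le_antisymm ?_ (iSup_le fun i => by
    simpa using map_mulLeft_range_evalMap_le (X := X) (isHomogeneous_X k i) t)
  rintro _ ⟨f, rfl⟩
  have hc : ((t + 1 : ℕ) : k) ≠ 0 := Nat.cast_ne_zero.mpr t.succ_ne_zero
  let g (i : Fin 3) : H t :=
    ⟨C ((t + 1 : ℕ) : k)⁻¹ * pderiv i f.1, by simpa using (IsHomogeneous.pderiv f.2).C_mul _⟩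
  have hf : evalMap X (t + 1) f =
      ∑ i, LinearMap.mulLeft k (fun q : X => q.1 i) (evalMap X t (g i)) := by
    ext q
    have heuler := IsHomogeneous.sum_mul_eval_pderiv f.2 q.1
    simp only [evalMap_apply, Finset.sum_apply, LinearMap.mulLeft_apply, Pi.mul_apply, g,
      eval_mul, eval_C]
    rw [← Finset.sum_congr rfl fun i _ => mul_left_comm _ _ _, ← Finset.mul_sum, heuler,
      inv_mul_cancel_left₀ hc]
  rw [hf]
  exact Submodule.sum_mem _ fun i _ => Submodule.mem_iSup_of_mem i ⟨_, ⟨g i, rfl⟩, rfl⟩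

theorem range_evalMap_add_two_eq_map [CharZero k] {t : ℕ} (w : X → k)
    (h : LinearMap.range (evalMap X (t + 1)) =
      (LinearMap.range (evalMap X t)).map (LinearMap.mulLeft k w)) :
    LinearMap.range (evalMap X (t + 1 + 1)) =
      (LinearMap.range (evalMap X (t + 1))).map (LinearMap.mulLeft k w) := by
  conv_lhs => rw [range_evalMap_succ (t + 1), h]
  rw [range_evalMap_succ t, Submodule.map_iSup]
  refine iSup_congr fun i => ?_
  rw [← Submodule.map_comp, ← Submodule.map_comp, ← LinearMap.mulLeft_mul,
    ← LinearMap.mulLeft_mul, mul_comm]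

theorem range_evalMap_eq_top_of_separating {t : ℕ}
    (h : ∀ q₀ : X, ∃ f : R3 k, f.IsHomogeneous t ∧ eval q₀.1 f ≠ 0 ∧
      ∀ q : X, q ≠ q₀ → eval q.1 f = 0) :
    LinearMap.range (evalMap X t) = ⊤ := by
  classical
  rw [eq_top_iff, ← (Pi.basisFun k X).span_eq, Submodule.span_le]
  rintro _ ⟨q₀, rfl⟩
  obtain ⟨f, hf, hq₀, hq⟩ := h q₀
  refine ⟨⟨C (eval q₀.1 f)⁻¹ * f, hf.C_mul _⟩, funext fun q => ?_⟩
  rcases eq_or_ne q q₀ with rfl | hne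
  · simp [hq₀]
  · simp [hq q hne, hne]

theorem exists_linForm_separating {p q : Fin 3 → k} (hq : q ≠ 0) (hpq : ¬ SameProj p q) :
    ∃ a, eval p (linForm a) = 0 ∧ eval q (linForm a) ≠ 0 := by
  have hspan : q ∉ k ∙ p := by
    rw [Submodule.mem_span_singleton]
    rintro ⟨c, rfl⟩
    exact hpq ⟨c, fun hc => hq (by simp [hc]), rfl⟩
  obtain ⟨φ, hφq, hφp⟩ := Submodule.exists_dual_map_eq_bot_of_notMem hspan inferInstance
  obtain ⟨a, ha⟩ := exists_linForm_eval_eq φ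
  refine ⟨a, ?_, by rwa [ha]⟩
  rw [ha, ← Submodule.mem_bot k, ← hφp]
  exact Submodule.mem_map_of_mem (Submodule.mem_span_singleton_self p)

theorem range_evalMap_card_sub_one_eq_top (hX : GoodPoints X) :
    LinearMap.range (evalMap X (X.card - 1)) = ⊤ := by
  classical
  refine range_evalMap_eq_top_of_separating fun q₀ => ?_
  have hsep (p : Fin 3 → k) (hp : p ∈ X.erase q₀.1) :
      ∃ a, eval p (linForm a) = 0 ∧ eval q₀.1 (linForm a) ≠ 0 :=
    exists_linForm_separating (hX.1 _ q₀.2)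
      (hX.2 _ (Finset.mem_of_mem_erase hp) _ q₀.2 (Finset.ne_of_mem_erase hp))
  choose a ha using hsep
  refine ⟨∏ p ∈ (X.erase q₀.1).attach, linForm (a p.1 p.2), ?_, ?_, fun q hq => ?_⟩
  · simpa [Finset.card_erase_of_mem q₀.2] using
      IsHomogeneous.prod (X.erase q₀.1).attach _ (fun _ => 1) fun p _ =>
        isHomogeneous_linForm (a p.1 p.2)
  · simpa [Finset.prod_ne_zero_iff] using fun p hp => (ha p hp).2
  · have hqe : q.1 ∈ X.erase q₀.1 := Finset.mem_erase.mpr ⟨Subtype.coe_ne_coe.mpr hq, q.2⟩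
    rw [map_prod]
    exact Finset.prod_eq_zero (Finset.mem_attach _ ⟨q.1, hqe⟩) (ha q.1 hqe).1

theorem exists_unit_map_mulLeft_range_evalMap_le [Infinite k] (hX : ∀ q ∈ X, q ≠ 0) :
    ∃ u : (X → k)ˣ, ∀ t, (LinearMap.range (evalMap X t)).map (LinearMap.mulLeft k (u : X → k)) ≤
      LinearMap.range (evalMap X (t + 1)) := by
  obtain ⟨φ, hφ⟩ := Module.exists_dual_forall_apply_ne_zero (K := k) (fun q : X => q.1)
    fun q => hX q.1 q.2
  obtain ⟨a, ha⟩ := exists_linForm_eval_eq φ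
  have hu : IsUnit fun q : X => eval q.1 (linForm a) :=
    Pi.isUnit_iff.mpr fun q => (ha q.1 ▸ hφ q).isUnit
  exact ⟨hu.unit, map_mulLeft_range_evalMap_le (isHomogeneous_linForm a)⟩

theorem range_evalMap_succ_eq_top [Infinite k] (hX : ∀ q ∈ X, q ≠ 0) {t : ℕ}
    (h : LinearMap.range (evalMap X t) = ⊤) : LinearMap.range (evalMap X (t + 1)) = ⊤ := by
  obtain ⟨u, hu⟩ := exists_unit_map_mulLeft_range_evalMap_le hX
  have hsurj : Function.Surjective (LinearMap.mulLeft k (u : X → k)) :=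
    (u.mulLeftLinearEquiv k (X → k)).surjective
  rw [eq_top_iff, ← LinearMap.range_eq_top.mpr hsurj, ← Submodule.map_top, ← h]
  exact hu t

theorem range_evalMap_eq_top_of_card_le [Infinite k] (hX : GoodPoints X) {t : ℕ}
    (ht : X.card ≤ t + 1) : LinearMap.range (evalMap X t) = ⊤ := by
  induction t, (show X.card - 1 ≤ t by omega) using Nat.le_induction with
  | base => exact range_evalMap_card_sub_one_eq_top hX
  | succ t _ ih => exact range_evalMap_succ_eq_top hX.1 (ih (by omega))

theorem range_evalMap_eq_top_of_finrank_eq [CharZero k] (hX : GoodPoints X) {r : ℕ}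
    (h : Module.finrank k (LinearMap.range (evalMap X (r + 1))) =
      Module.finrank k (LinearMap.range (evalMap X r))) :
    LinearMap.range (evalMap X r) = ⊤ := by
  obtain ⟨u, hu⟩ := exists_unit_map_mulLeft_range_evalMap_le hX.1
  have hfin (W : Submodule k (X → k)) :
      Module.finrank k (W.map (LinearMap.mulLeft k (u : X → k))) = Module.finrank k W :=
    (u.mulLeftLinearEquiv k (X → k)).finrank_map_eq W
  have hstep (s : ℕ) : LinearMap.range (evalMap X (r + s + 1)) =
      (LinearMap.range (evalMap X (r + s))).map (LinearMap.mulLeft k (u : X → k)) := by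
    induction s with
    | zero => exact (Submodule.eq_of_le_of_finrank_le (hu r) (by rw [hfin, h])).symm
    | succ s ih => exact range_evalMap_add_two_eq_map _ ih
  have hconst (s : ℕ) : Module.finrank k (LinearMap.range (evalMap X (r + s))) =
      Module.finrank k (LinearMap.range (evalMap X r)) := by
    induction s with
    | zero => rfl
    | succ s ih => rw [← add_assoc, hstep, hfin, ih]
  apply Submodule.eq_top_of_finrank_eq
  rw [← hconst X.card, range_evalMap_eq_top_of_card_le hX (by omega), finrank_top]

end EvalRange

/-- The map `a ↦ ∇(ℓ_a P)(q) = a + ℓ_a(q) ∇P(q)` is injective: by Euler's formula its kernel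
consists of `a` with `ℓ_a(q) = 0`, on which it is the identity. -/
theorem exists_eval_pderiv_linForm_mul_eq [CharZero k] {P : R3 k} {d : ℕ}
    (hP : P.IsHomogeneous d) {q : Fin 3 → k} (hq : eval q P = 1) (v : Fin 3 → k) :
    ∃ a, ∀ i, eval q (pderiv i (linForm a * P)) = v i := by
  let ψ : (Fin 3 → k) →ₗ[k] (Fin 3 → k) := LinearMap.id +
    LinearMap.toSpanSingleton k _ (fun i => eval q (pderiv i P)) ∘ₗ Fintype.linearCombination k q
  have hψ (a : Fin 3 → k) (i : Fin 3) : eval q (pderiv i (linForm a * P)) = ψ a i := by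
    simp [ψ, pderiv_linForm, eval_linForm, hq, Fintype.linearCombination_apply, Finset.sum_mul,
      mul_comm]
  have hinj : Function.Injective ψ := by
    rw [← LinearMap.ker_eq_bot, Submodule.eq_bot_iff]
    intro a ha
    have hgrad (i : Fin 3) : eval q (pderiv i (linForm a * P)) = 0 := by
      rw [hψ, LinearMap.mem_ker.mp ha, Pi.zero_apply]
    have heuler := ((isHomogeneous_linForm a).mul hP).sum_mul_eval_pderiv q
    simp only [hgrad, mul_zero, Finset.sum_const_zero, eval_mul, hq, mul_one] at heuler
    have hℓ : ∑ i, a i * q i = 0 := by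
      simpa [eval_linForm, Nat.cast_add_one_ne_zero, add_comm] using heuler.symm
    have hid : ψ a = a := by
      ext i
      simp [ψ, Fintype.linearCombination_apply, hℓ]
    rw [← hid]
    exact LinearMap.mem_ker.mp ha
  obtain ⟨a, ha⟩ := LinearMap.injective_iff_surjective.mp hinj v
  exact ⟨a, fun i => by rw [hψ, ha]⟩

theorem eval_pderiv_mul_mul_eq_zero {F G : R3 k} {q : Fin 3 → k} (hF : eval q F = 0)
    (hG : eval q G = 0) (L : R3 k) (i : Fin 3) : eval q (pderiv i (L * (F * G))) = 0 := by
  simp [hF, hG]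

theorem range_gradMap_eq_top [CharZero k] {X : Finset (Fin 3 → k)} {m n : ℕ}
    (hm : LinearMap.range (evalMap X m) = ⊤) (hn : LinearMap.range (evalMap X n) = ⊤) :
    LinearMap.range (gradMap X (m + n + 1)) = ⊤ := by
  classical
  choose F hF using fun q₀ : X => LinearMap.range_eq_top.mp hm (Pi.single q₀ 1)
  choose G hG using fun q₀ : X => LinearMap.range_eq_top.mp hn (Pi.single q₀ 1)
  have hFq (q₀ q : X) : eval q.1 (F q₀).1 = (Pi.single q₀ 1 : X → k) q := congr_fun (hF q₀) q
  have hGq (q₀ q : X) : eval q.1 (G q₀).1 = (Pi.single q₀ 1 : X → k) q := congr_fun (hG q₀) q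
  set P : X → R3 k := fun q₀ => (F q₀).1 * (G q₀).1
  have hP (q₀ : X) : (P q₀).IsHomogeneous (m + n) := IsHomogeneous.mul (F q₀).2 (G q₀).2
  have hP₁ (q₀ : X) : eval q₀.1 (P q₀) = 1 := by simp [P, hFq, hGq]
  rw [LinearMap.range_eq_top]
  intro v
  choose a ha using fun q₀ : X => exists_eval_pderiv_linForm_mul_eq (hP q₀) (hP₁ q₀) (v q₀)
  refine ⟨⟨∑ q₀, linForm (a q₀) * P q₀, Submodule.sum_mem _ fun q₀ _ => ?_⟩, ?_⟩
  · simpa [add_comm] using (isHomogeneous_linForm (a q₀)).mul (hP q₀)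
  · ext q i
    rw [gradMap_apply, map_sum, map_sum, Finset.sum_eq_single q (fun q₀ _ hne => ?_) (by simp)]
    · exact ha q i
    · exact eval_pderiv_mul_mul_eq_zero (by simp [hFq, Ne.symm hne]) (by simp [hGq, Ne.symm hne])
        _ i

/-- If a reduced point set `X ⊂ ℙ²` has `reg(I_X) = r+1`, then its first
infinitesimal neighborhood `Z` satisfies `reg(I_Z) ≤ 2·reg(I_X) = 2r+2`. -/
theorem stmt0 [CharZero k] (Xs : Finset (Fin 3 → k)) (hX : GoodPoints Xs)
    (r : ℕ) (hreg : regC (radIdeal Xs) = r + 1) :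
    regC (dblIdeal Xs) ≤ 2 * r + 2 := by
  have hr : LinearMap.range (evalMap Xs r) = ⊤ := range_evalMap_eq_top_of_finrank_eq hX <| by
    simpa only [hilb_radIdeal] using hilb_succ_eq_of_regC_eq hreg
  have hr' : LinearMap.range (evalMap Xs (r + 1)) = ⊤ := range_evalMap_succ_eq_top hX.1 hr
  refine regC_le_of_hilb_eq (by omega) ?_
  rw [hilb_dblIdeal hX.1 (by omega), hilb_dblIdeal hX.1 (by omega),
    show 2 * r + 2 = r + (r + 1) + 1 by ring, range_gradMap_eq_top hr hr',
    show r + (r + 1) + 1 - 1 = r + r + 1 by omega, range_gradMap_eq_top hr hr]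
end
end

section
/- Let X be a zero-dimensional subscheme of P^2 with saturated ideal I_X ⊆ R = k[x_0,x_1,x_2], let F ∈ I_X be homogeneous of degree d_1 and G homogeneous of degree d_2 such that {F,G} is a regular sequence. Then I_Z := G·I_X + (F) is a saturated ideal of a zero-dimensional scheme Z, there is an exact sequence 0 → R(−d_1−d_2) → I_X(−d_2) ⊕ R(−d_1) → I_Z → 0, and h_{R/I_Z}(t) = h_{R/(F,G)}(t) + h_{R/I_X}(t−d_2) for all t; in particular deg Z = deg X + d_1·d_2. -/
open MvPolynomial

noncomputable section

variable {k : Type} [Field k]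

/-! The Koszul complex of `x₀, x₁, x₂` is exact in positive degrees, so `R/(F)` has depth `≥ 2`:
if `x_j a_i ≡ x_i a_j (mod F)` for all `i, j`, then `a_i ≡ x_i A` for some `A`. If
`x_i f = G a_i + F b_i`, regularity of `G` modulo `F` gives these congruences; saturation of `I_X`
puts `A` in `I_X`, and then `x_i (f - G A) ∈ (F)` for all `i` forces `f - G A ∈ (F)`.

The ideals `G·I_X` and `(F)` meet in `(FG)`, so `dim (I_Z)_t = dim (I_X)_{t-d₂} + dim R_{t-d₁} -
dim R_{t-d₁-d₂}`; the same count for `(F, G)` has `dim R_{t-d₂}` as its first term, which gives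
the Hilbert function, and `dim R_t = (t+2).choose 2` gives `h_{R/(F,G)}(t) = d₁ d₂` for
`t ≥ d₁ + d₂`. -/

section Koszul

variable {σ R : Type*} [CommRing R]

theorem X_mul_eq_X_mul_iff [IsDomain R] {i j : σ} (hij : i ≠ j) {a b : MvPolynomial σ R} :
    X j * a = X i * b ↔ ∃ c, a = X i * c ∧ b = X j * c := by
  constructor
  · intro h
    obtain ⟨c, rfl⟩ : X i ∣ a := by
      refine (X_prime.dvd_or_dvd ⟨b, h⟩).resolve_left ?_
      rw [X_dvd_X]
      exact hij
    refine ⟨c, rfl, mul_left_cancel₀ (X_ne_zero i) ?_⟩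
    rw [← h]
    ring
  · rintro ⟨c, rfl, rfl⟩
    ring

variable [DecidableEq σ]

def killX (i : σ) : MvPolynomial σ R →ₐ[R] MvPolynomial σ R := aeval (Function.update X i 0)

theorem killX_X_self (i : σ) : killX i (X i : MvPolynomial σ R) = 0 := by simp [killX]

theorem killX_X_of_ne {i j : σ} (h : j ≠ i) : killX i (X j : MvPolynomial σ R) = X j := by
  simp [killX, Function.update_of_ne h]

theorem X_dvd_sub_killX (i : σ) (p : MvPolynomial σ R) : X i ∣ p - killX i p := by
  induction p using MvPolynomial.induction_on with
  | C a => simp [killX]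
  | add p q hp hq => simpa [add_sub_add_comm] using dvd_add hp hq
  | mul_X p j hp =>
    rcases eq_or_ne j i with rfl | hji
    · simp [killX_X_self]
    · simpa [killX_X_of_ne hji, sub_mul] using hp.mul_right (X j)

theorem exists_koszul_boundary [IsDomain R] {i j l : σ} (hij : i ≠ j) (hil : i ≠ l)
    (hjl : j ≠ l) {u v w : MvPolynomial σ R} (h : X i * u = X j * v - X l * w) :
    ∃ e₁ e₂ e₃, u = X j * e₃ - X l * e₂ ∧ v = X i * e₃ - X l * e₁ ∧
      w = X i * e₂ - X j * e₁ := by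
  have hkill : X l * killX i w = X j * killX i v := by
    have := congrArg (killX i) h
    simp only [map_mul, map_sub, killX_X_self, zero_mul, killX_X_of_ne hij.symm,
      killX_X_of_ne hil.symm] at this
    linear_combination this
  obtain ⟨s, hw, hv⟩ := (X_mul_eq_X_mul_iff hjl).mp hkill
  obtain ⟨α, hα⟩ := X_dvd_sub_killX i v
  obtain ⟨β, hβ⟩ := X_dvd_sub_killX i w
  refine ⟨-s, β, α, ?_, by linear_combination hα + hv, by linear_combination hβ + hw⟩
  apply mul_left_cancel₀ (X_ne_zero (R := R) i)
  linear_combination h + X j * hα + X j * hv - X l * hβ - X l * hw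

end Koszul

theorem exists_sub_X_mul_mem_span_of_cross_mem {R : Type*} [CommRing R] [IsDomain R]
    {F : MvPolynomial (Fin 3) R} (hF : F ≠ 0) (a : Fin 3 → MvPolynomial (Fin 3) R)
    (h : ∀ i j, X j * a i - X i * a j ∈ Ideal.span {F}) :
    ∃ A, ∀ i, a i - X i * A ∈ Ideal.span {F} := by
  choose c hc using fun i j => Ideal.mem_span_singleton'.mp (h i j)
  -- `c` is a Koszul 2-cycle; its boundary `e` corrects `a` to a genuine 1-cycle `a + e F`.
  have cycle : X 0 * c 1 2 = X 1 * c 0 2 - X 2 * c 0 1 :=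
    mul_right_cancel₀ hF (by linear_combination X 0 * hc 1 2 - X 1 * hc 0 2 + X 2 * hc 0 1)
  obtain ⟨e₀, e₁, e₂, h₁₂, h₀₂, h₀₁⟩ :=
    exists_koszul_boundary (by decide) (by decide) (by decide) cycle
  obtain ⟨A, h₀, h₁⟩ := (X_mul_eq_X_mul_iff (R := R) (i := 0) (j := 1) (by decide)
    (a := a 0 + e₀ * F) (b := a 1 + e₁ * F)).mp (by linear_combination -hc 0 1 + F * h₀₁)
  obtain ⟨A', h₀', h₂⟩ := (X_mul_eq_X_mul_iff (R := R) (i := 0) (j := 2) (by decide)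
    (a := a 0 + e₀ * F) (b := a 2 + e₂ * F)).mp (by linear_combination -hc 0 2 + F * h₀₂)
  have hA' : A' = A := mul_left_cancel₀ (X_ne_zero 0) (h₀'.symm.trans h₀)
  rw [hA'] at h₂
  refine ⟨A, fun i => Ideal.mem_span_singleton'.mpr ?_⟩
  fin_cases i <;> simp only [Fin.zero_eta, Fin.mk_one, Fin.reduceFinMk, Fin.isValue]
  · exact ⟨-e₀, by linear_combination -h₀⟩
  · exact ⟨-e₁, by linear_combination -h₁⟩
  · exact ⟨-e₂, by linear_combination -h₂⟩

theorem Ideal.mem_span_singleton_mul_sup_span_singleton {A : Type*} [CommRing A]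
    {I : Ideal A} {F G x : A} :
    x ∈ Ideal.span {G} * I ⊔ Ideal.span {F} ↔ ∃ a ∈ I, ∃ b, G * a + F * b = x := by
  simp only [Submodule.mem_sup, Ideal.mem_span_singleton_mul, Ideal.mem_span_singleton']
  constructor
  · rintro ⟨_, ⟨a, ha, rfl⟩, _, ⟨b, rfl⟩, rfl⟩
    exact ⟨a, ha, b, by ring⟩
  · rintro ⟨a, ha, b, rfl⟩
    exact ⟨_, ⟨a, ha, rfl⟩, _, ⟨b, rfl⟩, by ring⟩

theorem isSat_span_singleton {F : R3 k} (hF : F ≠ 0) : IsSat (Ideal.span {F}) := by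
  intro g hg
  obtain ⟨u, hu⟩ := Ideal.mem_span_singleton'.mp (hg 0)
  obtain ⟨v, hv⟩ := Ideal.mem_span_singleton'.mp (hg 1)
  obtain ⟨c, rfl, -⟩ := (X_mul_eq_X_mul_iff (R := k) (i := 0) (j := 1) (by decide)
    (a := u) (b := v)).mp (mul_right_cancel₀ hF (by linear_combination X 1 * hu - X 0 * hv))
  refine Ideal.mem_span_singleton'.mpr ⟨c, mul_left_cancel₀ (X_ne_zero 0) ?_⟩
  linear_combination hu

theorem IsSat.span_singleton_mul_sup {I : Ideal (R3 k)} (hsat : IsSat I) {F G : R3 k}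
    (hFI : F ∈ I) (hrp : RegPair F G) : IsSat (Ideal.span {G} * I ⊔ Ideal.span {F}) := by
  intro f hf
  choose a ha b hab using fun i => Ideal.mem_span_singleton_mul_sup_span_singleton.mp (hf i)
  have cross : ∀ i j, X j * a i - X i * a j ∈ Ideal.span {F} := fun i j =>
    hrp.2 _ (Ideal.mem_span_singleton'.mpr
      ⟨X i * b j - X j * b i, by linear_combination X i * hab j - X j * hab i⟩)
  obtain ⟨A, hA⟩ := exists_sub_X_mul_mem_span_of_cross_mem hrp.1 a cross
  have hAI : A ∈ I := hsat A fun i => by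
    simpa using I.sub_mem (ha i) (Ideal.span_singleton_le_iff_mem I |>.mpr hFI (hA i))
  have hfGA : f - G * A ∈ Ideal.span {F} := isSat_span_singleton hrp.1 _ fun i => by
    obtain ⟨e, he⟩ := Ideal.mem_span_singleton'.mp (hA i)
    exact Ideal.mem_span_singleton'.mpr
      ⟨b i + G * e, by linear_combination hab i + G * he⟩
  obtain ⟨B, hB⟩ := Ideal.mem_span_singleton'.mp hfGA
  exact Ideal.mem_span_singleton_mul_sup_span_singleton.mpr ⟨A, hAI, B, by linear_combination hB⟩

theorem homogeneousComponent_mul_of_isHomogeneous {σ R : Type*} [CommSemiring R]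
    {h : MvPolynomial σ R} {d : ℕ} (hh : h.IsHomogeneous d) (a : MvPolynomial σ R) (s : ℕ) :
    homogeneousComponent s (h * a) =
      if d ≤ s then h * homogeneousComponent (s - d) a else 0 := by
  conv_lhs => rw [← sum_homogeneousComponent a, Finset.mul_sum, map_sum]
  have hterm : ∀ e, homogeneousComponent s (h * homogeneousComponent e a) =
      if s = d + e then h * homogeneousComponent e a else 0 := fun e =>
    homogeneousComponent_of_mem (hh.mul (homogeneousComponent_isHomogeneous e a))
  simp only [hterm]
  split_ifs with hds
  · rw [Finset.sum_eq_single (s - d) (fun e _ hne => if_neg (by omega))]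
    · rw [if_pos (by omega)]
    · intro hnot
      rw [Finset.mem_range, not_lt] at hnot
      rw [if_pos (by omega), homogeneousComponent_eq_zero _ a (by omega), mul_zero]
  · exact Finset.sum_eq_zero fun e _ => if_neg (by omega)

theorem HomogIdeal.span_singleton_mul {G : R3 k} {d : ℕ} (hG : IsHomog G d) {I : Ideal (R3 k)}
    (hI : HomogIdeal I) : HomogIdeal (Ideal.span {G} * I) := by
  intro f hf s
  obtain ⟨a, ha, rfl⟩ := Ideal.mem_span_singleton_mul.mp hf
  rw [homogeneousComponent_mul_of_isHomogeneous hG]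
  split_ifs
  · exact Ideal.mem_span_singleton_mul.mpr ⟨_, hI a ha _, rfl⟩
  · exact zero_mem _

theorem homogIdeal_top : HomogIdeal (⊤ : Ideal (R3 k)) := fun _ _ _ => trivial

theorem homogIdeal_span_singleton {G : R3 k} {d : ℕ} (hG : IsHomog G d) :
    HomogIdeal (Ideal.span {G}) := by
  simpa using homogIdeal_top.span_singleton_mul hG

def homogPart (I : Ideal (R3 k)) (s : ℕ) : Submodule k (R3 k) :=
  I.restrictScalars k ⊓ homogeneousSubmodule (Fin 3) k s

theorem mem_homogPart {I : Ideal (R3 k)} {s : ℕ} {x : R3 k} :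
    x ∈ homogPart I s ↔ x ∈ I ∧ x.IsHomogeneous s := Iff.rfl

theorem finrank_homogeneousSubmodule {σ K : Type*} [Fintype σ] [DecidableEq σ] [Field K]
    (n : ℕ) :
    Module.finrank K (homogeneousSubmodule σ K n) = (Fintype.card σ + n - 1).choose n := by
  have hdeg : {d : σ →₀ ℕ | d.degree = n} =
      ((Finset.univ : Finset σ).finsuppAntidiag n : Set (σ →₀ ℕ)) := by
    ext d
    simp [Finsupp.degree_eq_sum, Finset.mem_finsuppAntidiag]
  rw [homogeneousSubmodule_eq_finsupp_supported, hdeg,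
    (AddMonoidAlgebra.supportedEquivFinsupp _).finrank_eq]
  simp [Finset.card_finsuppAntidiag_nat_eq_choose]

theorem finrank_homogeneousSubmodule_fin_three (n : ℕ) :
    Module.finrank k (homogeneousSubmodule (Fin 3) k n) = (n + 2).choose 2 := by
  rw [finrank_homogeneousSubmodule, Fintype.card_fin, show 3 + n - 1 = n + 2 by omega,
    Nat.choose_symm_add]

instance {σ K : Type*} [Finite σ] [Field K] (n : ℕ) :
    FiniteDimensional K (homogeneousSubmodule σ K n) :=
  Module.Finite.iff_fg.mpr (homogeneousSubmodule_fg σ K n)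

instance (I : Ideal (R3 k)) (s : ℕ) : FiniteDimensional k (homogPart I s) :=
  Submodule.finiteDimensional_of_le inf_le_right

theorem finrank_homogPart_le (I : Ideal (R3 k)) (s : ℕ) :
    Module.finrank k (homogPart I s) ≤ Module.finrank k (homogeneousSubmodule (Fin 3) k s) :=
  Submodule.finrank_mono inf_le_right

theorem hilb_add_finrank_homogPart (I : Ideal (R3 k)) (s : ℕ) :
    hilb I s + Module.finrank k (homogPart I s) =
      Module.finrank k (homogeneousSubmodule (Fin 3) k s) :=
  Nat.sub_add_cancel (finrank_homogPart_le I s)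

theorem homogPart_mono {I J : Ideal (R3 k)} (h : I ≤ J) (s : ℕ) : homogPart I s ≤ homogPart J s :=
  fun _ hx => ⟨h hx.1, hx.2⟩

theorem finrank_homogPart_top (s : ℕ) :
    Module.finrank k (homogPart (⊤ : Ideal (R3 k)) s) =
      Module.finrank k (homogeneousSubmodule (Fin 3) k s) := by
  rw [show homogPart ⊤ s = homogeneousSubmodule (Fin 3) k s by simp [homogPart]]

theorem homogPart_inf (I J : Ideal (R3 k)) (s : ℕ) :
    homogPart (I ⊓ J) s = homogPart I s ⊓ homogPart J s := by
  ext x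
  simp only [mem_homogPart, Submodule.mem_inf]
  tauto

theorem homogPart_sup {I J : Ideal (R3 k)} (hI : HomogIdeal I) (hJ : HomogIdeal J) (s : ℕ) :
    homogPart (I ⊔ J) s = homogPart I s ⊔ homogPart J s := by
  refine le_antisymm (fun x hx => ?_) (sup_le (homogPart_mono le_sup_left s)
    (homogPart_mono le_sup_right s))
  obtain ⟨hxIJ, hxs⟩ := mem_homogPart.mp hx
  obtain ⟨y, hy, z, hz, rfl⟩ := Submodule.mem_sup.mp hxIJ
  rw [← homogeneousComponent_eq_self hxs, map_add]
  exact Submodule.add_mem_sup ⟨hI y hy s, homogeneousComponent_isHomogeneous s y⟩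
    ⟨hJ z hz s, homogeneousComponent_isHomogeneous s z⟩

theorem homogPart_span_singleton_mul {G : R3 k} {d : ℕ} (hG : IsHomog G d) {I : Ideal (R3 k)}
    (hI : HomogIdeal I) {s : ℕ} (hds : d ≤ s) :
    homogPart (Ideal.span {G} * I) s = (homogPart I (s - d)).map (LinearMap.mulLeft k G) := by
  refine le_antisymm (fun x hx => ?_) ?_
  · obtain ⟨hxI, hxs⟩ := mem_homogPart.mp hx
    obtain ⟨a, ha, rfl⟩ := Ideal.mem_span_singleton_mul.mp hxI
    refine ⟨homogeneousComponent (s - d) a,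
      ⟨hI a ha _, homogeneousComponent_isHomogeneous _ a⟩, ?_⟩
    have hcomp := homogeneousComponent_mul_of_isHomogeneous hG a s
    rwa [if_pos hds, homogeneousComponent_eq_self hxs, eq_comm] at hcomp
  · rintro _ ⟨q, ⟨hqI, hqs⟩, rfl⟩
    refine ⟨Ideal.mem_span_singleton_mul.mpr ⟨q, hqI, rfl⟩, ?_⟩
    simpa [Nat.add_sub_cancel' hds] using IsHomogeneous.mul hG hqs

theorem homogPart_span_singleton_mul_of_lt {G : R3 k} {d : ℕ} (hG : IsHomog G d)
    (I : Ideal (R3 k)) {s : ℕ} (hsd : s < d) : homogPart (Ideal.span {G} * I) s = ⊥ := by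
  refine eq_bot_iff.mpr fun x hx => ?_
  obtain ⟨hxI, hxs⟩ := mem_homogPart.mp hx
  obtain ⟨a, -, rfl⟩ := Ideal.mem_span_singleton_mul.mp hxI
  rw [Submodule.mem_bot, ← homogeneousComponent_eq_self hxs,
    homogeneousComponent_mul_of_isHomogeneous hG, if_neg (by omega)]

theorem finrank_homogPart_span_singleton_mul {G : R3 k} {d : ℕ} (hG : IsHomog G d)
    (hG0 : G ≠ 0) {I : Ideal (R3 k)} (hI : HomogIdeal I) (s : ℕ) :
    Module.finrank k (homogPart (Ideal.span {G} * I) s) =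
      if d ≤ s then Module.finrank k (homogPart I (s - d)) else 0 := by
  split_ifs with hds
  · rw [homogPart_span_singleton_mul hG hI hds]
    exact (Submodule.equivMapOfInjective _ (mul_right_injective₀ hG0) _).finrank_eq.symm
  · rw [homogPart_span_singleton_mul_of_lt hG I (by omega), finrank_bot]

theorem finrank_homogPart_span_singleton {G : R3 k} {d : ℕ} (hG : IsHomog G d) (hG0 : G ≠ 0)
    {s : ℕ} (hds : d ≤ s) :
    Module.finrank k (homogPart (Ideal.span {G}) s) = (s - d + 2).choose 2 := by
  have h := finrank_homogPart_span_singleton_mul hG hG0 homogIdeal_top s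
  rwa [Ideal.mul_top, if_pos hds, finrank_homogPart_top,
    finrank_homogeneousSubmodule_fin_three] at h

theorem span_singleton_mul_inf_span_singleton {F G : R3 k} (hrp : RegPair F G)
    {I : Ideal (R3 k)} (hFI : F ∈ I) :
    Ideal.span {G} * I ⊓ Ideal.span {F} = Ideal.span {F * G} := by
  refine le_antisymm (fun x hx => ?_) (le_inf ?_ ?_)
  · obtain ⟨hxGI, hxF⟩ := Ideal.mem_inf.mp hx
    obtain ⟨a, -, rfl⟩ := Ideal.mem_span_singleton_mul.mp hxGI
    obtain ⟨c, rfl⟩ := Ideal.mem_span_singleton'.mp (hrp.2 a hxF)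
    exact Ideal.mem_span_singleton'.mpr ⟨c, by ring⟩
  · rw [Ideal.span_singleton_le_iff_mem, Ideal.mem_span_singleton_mul]
    exact ⟨F, hFI, mul_comm G F⟩
  · exact Ideal.span_singleton_le_span_singleton.mpr (dvd_mul_right F G)

theorem RegPair.right_ne_zero {F G : R3 k} (hrp : RegPair F G) {I : Ideal (R3 k)}
    (hFI : F ∈ I) (hI : I ≠ ⊤) : G ≠ 0 := by
  rintro rfl
  obtain ⟨c, hc⟩ := Ideal.mem_span_singleton'.mp (hrp.2 1 (by simp))
  exact hI (I.eq_top_of_isUnit_mem hFI (IsUnit.of_mul_eq_one_right c hc))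

theorem span_pair_eq_sup {A : Type*} [CommSemiring A] (F G : A) :
    Ideal.span {F, G} = Ideal.span {G} ⊔ Ideal.span {F} := by
  rw [Ideal.span_insert, sup_comm]

theorem finrank_homogPart_span_singleton_mul_sup_add {F G : R3 k} {d₁ d₂ : ℕ}
    (hF : IsHomog F d₁) (hG : IsHomog G d₂) (hrp : RegPair F G) {I : Ideal (R3 k)}
    (hI : HomogIdeal I) (hFI : F ∈ I) (s : ℕ) :
    Module.finrank k (homogPart (Ideal.span {G} * I ⊔ Ideal.span {F}) s) +
        Module.finrank k (homogPart (Ideal.span {F * G}) s) =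
      Module.finrank k (homogPart (Ideal.span {G} * I) s) +
        Module.finrank k (homogPart (Ideal.span {F}) s) := by
  rw [homogPart_sup (hI.span_singleton_mul hG) (homogIdeal_span_singleton hF),
    ← span_singleton_mul_inf_span_singleton hrp hFI, homogPart_inf]
  exact Submodule.finrank_sup_add_finrank_inf_eq _ _

theorem hilb_span_singleton_mul_sup {F G : R3 k} {d₁ d₂ : ℕ} (hF : IsHomog F d₁)
    (hG : IsHomog G d₂) (hG0 : G ≠ 0) (hrp : RegPair F G) {I : Ideal (R3 k)}
    (hI : HomogIdeal I) (hFI : F ∈ I) (s : ℕ) :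
    hilb (Ideal.span {G} * I ⊔ Ideal.span {F}) s =
      hilb (Ideal.span {F, G}) s + if d₂ ≤ s then hilb I (s - d₂) else 0 := by
  have hZ := finrank_homogPart_span_singleton_mul_sup_add hF hG hrp hI hFI s
  have hCI := finrank_homogPart_span_singleton_mul_sup_add hF hG hrp homogIdeal_top trivial s
  have hGI := finrank_homogPart_span_singleton_mul hG hG0 hI s
  have hGR := finrank_homogPart_span_singleton_mul hG hG0 homogIdeal_top s
  rw [Ideal.mul_top] at hCI
  rw [Ideal.mul_top, finrank_homogPart_top] at hGR
  rw [span_pair_eq_sup]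
  have := hilb_add_finrank_homogPart (Ideal.span {G} * I ⊔ Ideal.span {F}) s
  have := hilb_add_finrank_homogPart (Ideal.span {G} ⊔ Ideal.span {F}) s
  have := hilb_add_finrank_homogPart I (s - d₂)
  split_ifs at hGI hGR ⊢ <;> omega

theorem choose_two_add_add_choose_two (a b n : ℕ) :
    (a + b + n + 2).choose 2 + (n + 2).choose 2 =
      (b + n + 2).choose 2 + (a + n + 2).choose 2 + a * b := by
  have h (m : ℕ) : ((m + 2).choose 2 : ℚ) = (m + 2) * (m + 1) / 2 := by
    rw [Nat.cast_choose_two]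
    push_cast
    ring
  exact_mod_cast (by push_cast [h]; ring : ((a + b + n + 2).choose 2 + (n + 2).choose 2 : ℚ) =
    (b + n + 2).choose 2 + (a + n + 2).choose 2 + a * b)

theorem hilb_span_pair_of_add_le {F G : R3 k} {d₁ d₂ : ℕ} (hF : IsHomog F d₁)
    (hG : IsHomog G d₂) (hG0 : G ≠ 0) (hrp : RegPair F G) {s : ℕ} (hs : d₁ + d₂ ≤ s) :
    hilb (Ideal.span {F, G}) s = d₁ * d₂ := by
  obtain ⟨n, rfl⟩ := Nat.exists_eq_add_of_le hs
  have hCI := finrank_homogPart_span_singleton_mul_sup_add hF hG hrp homogIdeal_top trivial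
    (d₁ + d₂ + n)
  rw [Ideal.mul_top, finrank_homogPart_span_singleton hF hrp.1 (by omega),
    finrank_homogPart_span_singleton hG hG0 (by omega),
    finrank_homogPart_span_singleton (hF.mul hG) (mul_ne_zero hrp.1 hG0) (by omega),
    show d₁ + d₂ + n - d₁ = d₂ + n by omega, show d₁ + d₂ + n - d₂ = d₁ + n by omega,
    show d₁ + d₂ + n - (d₁ + d₂) = n by omega] at hCI
  rw [span_pair_eq_sup]
  have hQ := hilb_add_finrank_homogPart (Ideal.span {G} ⊔ Ideal.span {F}) (d₁ + d₂ + n)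
  rw [finrank_homogeneousSubmodule_fin_three] at hQ
  have := choose_two_add_add_choose_two d₁ d₂ n
  omega

section BasicDoubleLink

variable {A : Type*} [CommRing A] (I : Ideal A) (F G : A)

def bdlSyzygy (hFI : F ∈ I) : A →ₗ[A] I × A :=
  ((LinearMap.mulLeft A F).codRestrict I fun a => I.mul_mem_right a hFI).prod
    (-LinearMap.mulLeft A G)

def bdlSum : I × A →ₗ[A] A :=
  (G • I.subtype).coprod (LinearMap.mulLeft A F)

theorem range_bdlSum :
    LinearMap.range (bdlSum I F G) = Ideal.span {G} * I ⊔ Ideal.span {F} := by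
  ext x
  rw [Ideal.mem_span_singleton_mul_sup_span_singleton]
  exact ⟨fun ⟨p, hp⟩ => ⟨p.1, p.1.2, p.2, hp⟩, fun ⟨a, ha, b, hab⟩ => ⟨(⟨a, ha⟩, b), hab⟩⟩

variable {I F G}

theorem bdlSyzygy_injective [IsDomain A] (hFI : F ∈ I) (hF0 : F ≠ 0) :
    Function.Injective (bdlSyzygy I F G hFI) :=
  fun _ _ h => mul_left_cancel₀ hF0 (congrArg (fun p => (p.1 : A)) h)

theorem exact_bdlSyzygy_bdlSum [IsDomain A] (hFI : F ∈ I) (hF0 : F ≠ 0)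
    (hreg : ∀ a, G * a ∈ Ideal.span {F} → a ∈ Ideal.span {F}) :
    Function.Exact (bdlSyzygy I F G hFI) (bdlSum I F G) := by
  intro p
  constructor
  · obtain ⟨⟨x, hxI⟩, y⟩ := p
    intro hxy
    change G * x + F * y = 0 at hxy
    obtain ⟨a, rfl⟩ := Ideal.mem_span_singleton'.mp
      (hreg x (Ideal.mem_span_singleton'.mpr ⟨-y, by linear_combination -hxy⟩))
    refine ⟨a, Prod.ext (Subtype.ext (mul_comm F a)) (mul_left_cancel₀ hF0 ?_)⟩
    change F * -(G * a) = F * y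
    linear_combination -hxy
  · rintro ⟨a, rfl⟩
    change G * (F * a) + F * -(G * a) = 0
    ring

end BasicDoubleLink

theorem stmt5_general (IX : Ideal (R3 k)) (hhom : HomogIdeal IX)
    (hsat : IsSat IX) (hne : IX ≠ ⊤) (hzd : ∃ N c, ∀ s, N ≤ s → hilb IX s = c)
    (F G : R3 k) (d1 d2 : ℕ) (hF : F ∈ IX) (hFd : IsHomog F d1) (hGd : IsHomog G d2)
    (hrp : RegPair F G) :
    let IZ : Ideal (R3 k) := Ideal.span {G} * IX ⊔ Ideal.span {F}
    IsSat IZ ∧ (∃ N c, ∀ s, N ≤ s → hilb IZ s = c) ∧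
    (∃ (f1 : R3 k →ₗ[R3 k] (↥IX × R3 k)) (f2 : (↥IX × R3 k) →ₗ[R3 k] R3 k),
      (∀ a : R3 k, ((f1 a).1 : R3 k) = F * a ∧ (f1 a).2 = -(G * a)) ∧
      (∀ p : ↥IX × R3 k, f2 p = G * (p.1 : R3 k) + F * p.2) ∧
      Function.Injective f1 ∧ Function.Exact f1 f2 ∧ LinearMap.range f2 = IZ) ∧
    (∀ s : ℕ, hilb IZ s =
      hilb (Ideal.span {F, G}) s + (if d2 ≤ s then hilb IX (s - d2) else 0)) ∧
    (∃ N, ∀ s, N ≤ s → hilb IZ s = hilb IX s + d1 * d2) := by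
  intro IZ
  have hG0 : G ≠ 0 := hrp.right_ne_zero hF hne
  have hZ := hilb_span_singleton_mul_sup hFd hGd hG0 hrp hhom hF
  obtain ⟨N, c, hN⟩ := hzd
  have hZ_eventually : ∀ s, N + d1 + d2 ≤ s → hilb IZ s = c + d1 * d2 := fun s hs => by
    rw [hZ, if_pos (by omega), hilb_span_pair_of_add_le hFd hGd hG0 hrp (by omega),
      hN _ (by omega), add_comm]
  refine ⟨hsat.span_singleton_mul_sup hF hrp, ⟨_, _, hZ_eventually⟩,
    ⟨bdlSyzygy IX F G hF, bdlSum IX F G, fun _ => ⟨rfl, rfl⟩, fun _ => rfl,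
      bdlSyzygy_injective hF hrp.1, exact_bdlSyzygy_bdlSum hF hrp.1 hrp.2, range_bdlSum IX F G⟩,
    hZ, ⟨N + d1 + d2, fun s hs => by rw [hZ_eventually s hs, hN s (by omega)]⟩⟩

/-- basic double linkage.  If `I_X` is the saturated ideal of a
zero-dimensional subscheme of `ℙ²`, `F ∈ I_X` homogeneous of degree `d₁`, `G`
homogeneous of degree `d₂` and `{F,G}` a regular sequence, then `I_Z = G·I_X + (F)`
is the saturated ideal of a zero-dimensional scheme, there is a short exact sequence
`0 → R(-d₁-d₂) → I_X(-d₂) ⊕ R(-d₁) → I_Z → 0`, and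
`h_{R/I_Z}(t) = h_{R/(F,G)}(t) + h_{R/I_X}(t-d₂)`; in particular
`deg Z = deg X + d₁d₂`. -/
theorem stmt5 [CharZero k] (IX : Ideal (R3 k)) (hhom : HomogIdeal IX)
    (hsat : IsSat IX) (hne : IX ≠ ⊤) (hzd : ∃ N c, ∀ s, N ≤ s → hilb IX s = c)
    (F G : R3 k) (d1 d2 : ℕ) (hF : F ∈ IX) (hFd : IsHomog F d1) (hGd : IsHomog G d2)
    (hrp : RegPair F G) :
    let IZ : Ideal (R3 k) := Ideal.span {G} * IX ⊔ Ideal.span {F}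
    IsSat IZ ∧ (∃ N c, ∀ s, N ≤ s → hilb IZ s = c) ∧
    (∃ (f1 : R3 k →ₗ[R3 k] (↥IX × R3 k)) (f2 : (↥IX × R3 k) →ₗ[R3 k] R3 k),
      (∀ a : R3 k, ((f1 a).1 : R3 k) = F * a ∧ (f1 a).2 = -(G * a)) ∧
      (∀ p : ↥IX × R3 k, f2 p = G * (p.1 : R3 k) + F * p.2) ∧
      Function.Injective f1 ∧ Function.Exact f1 f2 ∧ LinearMap.range f2 = IZ) ∧
    (∀ s : ℕ, hilb IZ s =
      hilb (Ideal.span {F, G}) s + (if d2 ≤ s then hilb IX (s - d2) else 0)) ∧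
    (∃ N, ∀ s, N ≤ s → hilb IZ s = hilb IX s + d1 * d2) :=
  stmt5_general IX hhom hsat hne hzd F G d1 d2 hF hFd hGd hrp
end
end

section
/- For the standard pseudo linear configuration of type (1,1,2,2,3,3,...,m,m) in P^2 (points at integer lattice positions with rows aligned to the left), the set contains 2m collinear points (on the vertical line x = 0), and hence its regularity is at least 2m, which exceeds the largest entry m of the type vector; thus condition (*) failing allows regularity arbitrarily larger than m_p. -/
open MvPolynomial

noncomputable section

variable {k : Type} [Field k]

/-!
The Hilbert function of a finite set `S` of points in the chart `x₂ = 1` is the rank of the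
evaluation map on forms of degree `t`. Multiplying by `x₂` shows it is nondecreasing, and it is
bounded by `#S`. If `S` contains `n` points `[0 : a : 1]` of the line `x₀ = 0`, then for
`t + 1 < n` the values of `x₁ ^ (t + 1)` on `S` are not those of a form `f` of degree `t`:
otherwise `X ^ (t + 1) - f(0, X, 1)` would be a nonzero polynomial of degree `t + 1` with `n`
roots. So the Hilbert function strictly increases up to degree `n - 1`, and the regularity is
at least `n`; for the configuration of type `(1,1,…,m,m)` the column `x₀ = 0` has `2m` points.
-/

section EvalForms

variable {σ : Type*}

theorem MvPolynomial.IsHomogeneous.eval_smul_s12 {R : Type*} [CommSemiring R] {f : MvPolynomial σ R}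
    {n : ℕ} (hf : f.IsHomogeneous n) (c : R) (x : σ → R) :
    eval (c • x) f = c ^ n * eval x f := by
  rw [eval_eq, eval_eq, Finset.mul_sum]
  refine Finset.sum_congr rfl fun d hd => ?_
  simp_rw [Pi.smul_apply, smul_eq_mul, mul_pow, Finset.prod_mul_distrib,
    Finset.prod_pow_eq_pow_sum, ← hf.degree_eq_sum_deg_support hd]
  ring

theorem MvPolynomial.polynomial_eval_aeval {R : Type*} [CommSemiring R] (g : σ → Polynomial R)
    (f : MvPolynomial σ R) (a : R) :
    (aeval g f).eval a = eval (fun i => (g i).eval a) f := by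
  rw [← Polynomial.coe_aeval_eq_eval, ← AlgHom.comp_apply, comp_aeval, ← coe_aeval_eq_eval]
  rfl

theorem MvPolynomial.natDegree_aeval_le_totalDegree {R : Type*} [CommSemiring R]
    {g : σ → Polynomial R} (hg : ∀ i, (g i).natDegree ≤ 1) (f : MvPolynomial σ R) :
    (aeval g f).natDegree ≤ f.totalDegree := by
  rw [aeval_def, eval₂_eq]
  refine Polynomial.natDegree_sum_le_of_forall_le _ _ fun d hd => ?_
  refine (Polynomial.natDegree_C_mul_le _ _).trans <| (Polynomial.natDegree_prod_le _ _).trans ?_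
  calc ∑ i ∈ d.support, (g i ^ d i).natDegree
      ≤ ∑ i ∈ d.support, d i := Finset.sum_le_sum fun i _ =>
        Polynomial.natDegree_pow_le.trans (by simpa using Nat.mul_le_mul_left (d i) (hg i))
    _ ≤ f.totalDegree := le_totalDegree hd

instance [Finite σ] (t : ℕ) : FiniteDimensional k (homogeneousSubmodule σ k t) :=
  Submodule.finiteDimensional_of_le (S₂ := restrictTotalDegree σ k t) fun _ hf =>
    (mem_restrictTotalDegree _ _ _).mpr (IsHomogeneous.totalDegree_le hf)

def evalForms (S : Finset (σ → k)) (t : ℕ) : homogeneousSubmodule σ k t →ₗ[k] (S → k) where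
  toFun f p := eval (p : σ → k) (f : MvPolynomial σ k)
  map_add' f g := by funext p; simp
  map_smul' c f := by funext p; simp [smul_eval]

@[simp]
theorem evalForms_apply (S : Finset (σ → k)) (t : ℕ) (f : homogeneousSubmodule σ k t) (p : S) :
    evalForms S t f p = eval (p : σ → k) (f : MvPolynomial σ k) :=
  rfl

theorem range_evalForms_le_succ {S : Finset (σ → k)} {i : σ} (hS : ∀ p ∈ S, p i = 1) (t : ℕ) :
    LinearMap.range (evalForms S t) ≤ LinearMap.range (evalForms S (t + 1)) := by
  rintro v ⟨f, rfl⟩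
  refine ⟨⟨X i * (f : MvPolynomial σ k), add_comm t 1 ▸ (isHomogeneous_X k i).mul f.2⟩, ?_⟩
  funext p
  simp [hS p p.2]

end EvalForms

theorem mem_radIdeal {S : Finset (Fin 3 → k)} {f : R3 k} :
    f ∈ radIdeal S ↔ ∀ p ∈ S, ∀ c : k, eval (c • p) f = 0 := by
  simp only [radIdeal, Ideal.mem_iInf, pointIdeal]
  exact forall₂_congr fun p _ => ⟨fun h c => h _ ⟨c, rfl⟩, fun h _ ⟨c, hx⟩ => hx ▸ h c⟩

theorem ker_evalForms (S : Finset (Fin 3 → k)) (t : ℕ) :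
    LinearMap.ker (evalForms S t) =
      (Submodule.restrictScalars k (radIdeal S) ⊓ homogeneousSubmodule (Fin 3) k t).comap
        (homogeneousSubmodule (Fin 3) k t).subtype := by
  ext f
  simp only [LinearMap.mem_ker, Submodule.mem_comap, Submodule.mem_inf,
    Submodule.coe_subtype, Submodule.restrictScalars_mem, SetLike.coe_mem, and_true, mem_radIdeal]
  refine ⟨fun h p hp c => ?_, fun h => funext fun p => by simpa using h p p.2 1⟩
  rw [f.2.eval_smul_s12, show eval p (f : R3 k) = 0 from congrFun h ⟨p, hp⟩, mul_zero]

theorem hilb_radIdeal_eq_finrank_range (S : Finset (Fin 3 → k)) (t : ℕ) :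
    hilb (radIdeal S) t = Module.finrank k (LinearMap.range (evalForms S t)) := by
  have hker : Module.finrank k
      ↥(Submodule.restrictScalars k (radIdeal S) ⊓ homogeneousSubmodule (Fin 3) k t)
      = Module.finrank k (LinearMap.ker (evalForms S t)) := by
    rw [ker_evalForms, ← Submodule.finrank_map_subtype_eq, Submodule.map_comap_subtype,
      inf_of_le_right inf_le_right]
  rw [hilb, hker, ← LinearMap.finrank_range_add_finrank_ker (evalForms S t)]
  omega

theorem pow_eval_notMem_range_evalForms {S : Finset (Fin 3 → k)} {T : Finset k}
    (hT : ∀ a ∈ T, ![0, a, 1] ∈ S) {t : ℕ} (ht : t + 1 < T.card) :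
    (fun p : S => (p : Fin 3 → k) 1 ^ (t + 1)) ∉ LinearMap.range (evalForms S t) := by
  rintro ⟨f, hf⟩
  set P : Polynomial k := aeval ![0, Polynomial.X, 1] (f : R3 k)
  have hP : P.natDegree ≤ t :=
    (natDegree_aeval_le_totalDegree (by intro i; fin_cases i <;> simp) _).trans f.2.totalDegree_le
  have hQ : (Polynomial.X ^ (t + 1) - P).natDegree = t + 1 := by
    rw [Polynomial.natDegree_sub_eq_left_of_natDegree_lt] <;> simp; omega
  have hroots : ∀ a ∈ T, (Polynomial.X ^ (t + 1) - P).eval a = 0 := by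
    intro a ha
    have := congrFun hf ⟨_, hT a ha⟩
    have hline : (fun i => (![0, Polynomial.X, 1] i).eval a) = ![0, a, 1] := by
      funext i; fin_cases i <;> simp
    rw [evalForms_apply] at this
    simp [P, polynomial_eval_aeval, hline, this]
  have := Polynomial.eq_zero_of_natDegree_lt_card_of_eval_eq_zero' _ T hroots (hQ.trans_lt ht)
  simp [this] at hQ

theorem le_regC {I : Ideal (R3 k)} {n B : ℕ} (hmono : Monotone (hilb I))
    (hbdd : ∀ t, hilb I t ≤ B) (hlt : ∀ t, t + 1 < n → hilb I t < hilb I (t + 1)) :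
    n ≤ regC I := by
  have hne : {t | 0 < t ∧ hilb I t = hilb I (t - 1)}.Nonempty := by
    by_contra hempty
    have hsm : StrictMono (hilb I) := strictMono_nat_of_lt_succ fun t =>
      (hmono t.le_succ).lt_of_ne fun heq => hempty ⟨t + 1, t.succ_pos, heq.symm⟩
    have := (hsm.le_apply (x := B + 1)).trans (hbdd (B + 1))
    omega
  refine le_csInf hne fun t ⟨ht0, heq⟩ => ?_
  by_contra! htn
  obtain ⟨s, rfl⟩ := Nat.exists_eq_succ_of_ne_zero ht0.ne'
  exact (hlt s htn).ne heq.symm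

theorem card_le_regC_radIdeal {S : Finset (Fin 3 → k)} (hS : ∀ p ∈ S, p 2 = 1) {T : Finset k}
    (hT : ∀ a ∈ T, ![0, a, 1] ∈ S) : T.card ≤ regC (radIdeal S) := by
  have hilb_eq := hilb_radIdeal_eq_finrank_range S
  refine le_regC (B := S.card) (monotone_nat_of_le_succ fun t => ?_) (fun t => ?_) (fun t ht => ?_)
  · rw [hilb_eq, hilb_eq]
    exact Submodule.finrank_mono (range_evalForms_le_succ hS t)
  · rw [hilb_eq]
    exact (Submodule.finrank_le _).trans_eq (by simp)
  · rw [hilb_eq, hilb_eq]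
    refine Submodule.finrank_lt_finrank_of_lt <| (range_evalForms_le_succ hS t).lt_of_ne fun h => ?_
    refine pow_eval_notMem_range_evalForms hT ht (h ▸ ?_)
    exact ⟨⟨X 1 ^ (t + 1), isHomogeneous_X_pow 1 (t + 1)⟩, funext fun p => by simp⟩

/-- the standard pseudo linear configuration of type
`(1,1,2,2,…,m,m)` contains `2m` collinear points (the column `x = 0`), so its
regularity is at least `2m > m`. -/
theorem stmt12 [CharZero k] [DecidableEq k] (m : ℕ) (hm : 0 < m) :
    let S : Finset (Fin 3 → k) := (Finset.range (2 * m)).biUnion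
      (fun i => (Finset.range (i / 2 + 1)).image fun j : ℕ => ![(j : k), (i : k), 1])
    (S.filter fun q => q 0 = 0).card = 2 * m ∧
    (∀ q ∈ S.filter fun q => q 0 = 0, onLine ![(1 : k), 0, 0] q) ∧
    2 * m ≤ regC (radIdeal S) ∧ m < 2 * m := by
  intro S
  have hS : ∀ p ∈ S, p 2 = 1 := by
    simp only [S, Finset.mem_biUnion, Finset.mem_image]
    rintro _ ⟨i, -, j, -, rfl⟩
    rfl
  have hcolumn : S.filter (fun q => q 0 = 0) =
      (Finset.range (2 * m)).image fun i : ℕ => ![0, (i : k), 1] := by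
    ext q
    simp only [S, Finset.mem_filter, Finset.mem_biUnion, Finset.mem_image, Finset.mem_range]
    constructor
    · rintro ⟨⟨i, hi, j, -, rfl⟩, hj⟩
      obtain rfl : j = 0 := by simpa using hj
      exact ⟨i, hi, by simp⟩
    · rintro ⟨i, hi, rfl⟩
      exact ⟨⟨i, hi, 0, by omega, by simp⟩, rfl⟩
  have hinj : Function.Injective fun i : ℕ => ![(0 : k), (i : k), 1] :=
    fun a b h => by simpa using congrFun h 1
  refine ⟨?_, fun q hq => ?_, ?_, by omega⟩
  · rw [hcolumn, Finset.card_image_of_injective _ hinj, Finset.card_range]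
  · simp [onLine, Fin.sum_univ_three, (Finset.mem_filter.mp hq).2]
  · have hT : ∀ a ∈ (Finset.range (2 * m)).image (Nat.cast : ℕ → k), ![0, a, 1] ∈ S := by
      simp only [Finset.mem_image]
      rintro _ ⟨i, hi, rfl⟩
      exact (Finset.mem_filter.mp (hcolumn ▸ Finset.mem_image_of_mem _ hi)).1
    simpa [Finset.card_image_of_injective _ Nat.cast_injective] using card_le_regC_radIdeal hS hT

end
end
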